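/- Let R = k[[x,y,z]]/(z²+x³+y⁵) for a field k, and let φ₇ be the 4×4 block matrix with upper-right block having rows (−y³, −x²),(x, −y²) and lower-left block having rows (y², −x²),(x, y³) (zero diagonal blocks). Then φ₇² = −(x³+y⁵)·id₄, and the trace ideal of coker(z·id₄ − φ₇) over R equals (x, y², z). -/

import Mathlib

/-- The trace ideal of an `R`-module `M`: the sum of the images of all `R`-linear maps
`M → R`. -/
def traceIdeal (R : Type*) [CommRing R] (M : Type*) [AddCommGroup M] [Module R M] :
    Ideal R :=
  ⨆ f : M →ₗ[R] R, LinearMap.range f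

/-- The two-dimensional `E₈`-singularity `R = k⟦x,y,z⟧/(z² + x³ + y⁵)`. -/
noncomputable abbrev E8 (k : Type*) [Field k] : Type _ :=
  MvPowerSeries (Fin 3) k ⧸
    Ideal.span {(MvPowerSeries.X 2 : MvPowerSeries (Fin 3) k) ^ 2
      + MvPowerSeries.X 0 ^ 3 + MvPowerSeries.X 1 ^ 5}

/-- The image of `x` in `R = k⟦x,y,z⟧/(z² + x³ + y⁵)`. -/
noncomputable def x18 (k : Type*) [Field k] : E8 k :=
  Ideal.Quotient.mk _ (MvPowerSeries.X 0 : MvPowerSeries (Fin 3) k)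

/-- The image of `y` in `R = k⟦x,y,z⟧/(z² + x³ + y⁵)`. -/
noncomputable def y18 (k : Type*) [Field k] : E8 k :=
  Ideal.Quotient.mk _ (MvPowerSeries.X 1 : MvPowerSeries (Fin 3) k)

/-- The image of `z` in `R = k⟦x,y,z⟧/(z² + x³ + y⁵)`. -/
noncomputable def z18 (k : Type*) [Field k] : E8 k :=
  Ideal.Quotient.mk _ (MvPowerSeries.X 2 : MvPowerSeries (Fin 3) k)

/-- The matrix `φ₇` for `E₈`: a `4 × 4` block matrix with zero diagonal blocks,
upper-right block `!![-y³, -x²; x, -y²]` and lower-left block `!![y², -x²; x, y³]`. -/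
noncomputable def phi18 (k : Type*) [Field k] : Matrix (Fin 4) (Fin 4) (E8 k) :=
  !![0, 0, -(y18 k) ^ 3, -(x18 k) ^ 2;
     0, 0, x18 k, -(y18 k) ^ 2;
     (y18 k) ^ 2, -(x18 k) ^ 2, 0, 0;
     x18 k, (y18 k) ^ 3, 0, 0]

section Aux

variable {k : Type*} [Field k]

/-- Membership in `(X₀, X₁^m, X₂)` forces vanishing of small pure-`y` coefficients. -/
lemma aux_coeff_vanish (m : ℕ) (W : MvPowerSeries (Fin 3) k)
    (hW : W ∈ Ideal.span {MvPowerSeries.X 0, MvPowerSeries.X 1 ^ m, MvPowerSeries.X 2}) :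
    ∀ d : Fin 3 →₀ ℕ, d 0 = 0 → d 2 = 0 → d 1 < m → MvPowerSeries.coeff (R := k) d W = 0 := by
  induction hW using Submodule.span_induction with
  | mem w hw =>
    intro d h0 h2 h1
    rcases hw with rfl | rfl | rfl
    · rw [MvPowerSeries.coeff_X, if_neg]
      intro h; rw [h] at h0; simp at h0
    · rw [MvPowerSeries.X_pow_eq, MvPowerSeries.coeff_monomial, if_neg]
      intro h; rw [h] at h1; simp at h1
    · rw [MvPowerSeries.coeff_X, if_neg]
      intro h; rw [h] at h2; simp at h2
  | zero => intro d _ _ _; simp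
  | add u v _ _ hu hv => intro d h0 h2 h1; rw [map_add, hu d h0 h2 h1, hv d h0 h2 h1, add_zero]
  | smul a w _ hw =>
    intro d h0 h2 h1
    rw [smul_eq_mul, MvPowerSeries.coeff_mul]
    refine Finset.sum_eq_zero fun p hp => ?_
    replace hp : p.1 + p.2 = d := by simpa using hp
    have hle : p.2 ≤ d := hp ▸ le_add_self
    rw [hw p.2 (Nat.le_zero.1 (h0 ▸ hle 0)) (Nat.le_zero.1 (h2 ▸ hle 2))
      (lt_of_le_of_lt (hle 1) h1), mul_zero]

/-- Conversely, vanishing of small pure-`y` coefficients gives membership in `(X₀, X₁^m, X₂)`. -/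
lemma aux_mem_of_coeff (m : ℕ) (V : MvPowerSeries (Fin 3) k)
    (h : ∀ d : Fin 3 →₀ ℕ, d 0 = 0 → d 2 = 0 → d 1 < m → MvPowerSeries.coeff (R := k) d V = 0) :
    V ∈ Ideal.span {MvPowerSeries.X 0, MvPowerSeries.X 1 ^ m, MvPowerSeries.X 2} := by
  classical
  have hsle : ∀ (s : Fin 3) (n : ℕ) (d : Fin 3 →₀ ℕ), Finsupp.single s n ≤ d ↔ n ≤ d s :=
    fun s n d => Finsupp.single_le_iff
  have hsub : ∀ (s : Fin 3) (n : ℕ) (d : Fin 3 →₀ ℕ) (t : Fin 3),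
      (d - Finsupp.single s n) t = d t - Finsupp.single s n t := fun s n d t =>
    Finsupp.tsub_apply d _ t
  set p : MvPowerSeries (Fin 3) k := fun d => MvPowerSeries.coeff (R := k) (d + Finsupp.single 0 1) V
  set q : MvPowerSeries (Fin 3) k :=
    fun d => if d 0 = 0 then MvPowerSeries.coeff (R := k) (d + Finsupp.single 2 1) V else 0
  set r : MvPowerSeries (Fin 3) k :=
    fun d => if d 0 = 0 ∧ d 2 = 0 then MvPowerSeries.coeff (R := k) (d + Finsupp.single 1 m) V else 0
  have hcp : ∀ d, MvPowerSeries.coeff (R := k) d p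
      = MvPowerSeries.coeff (R := k) (d + Finsupp.single 0 1) V := fun d => rfl
  have hcq : ∀ d, MvPowerSeries.coeff (R := k) d q
      = if d 0 = 0 then MvPowerSeries.coeff (R := k) (d + Finsupp.single 2 1) V else 0 := fun d => rfl
  have hcr : ∀ d, MvPowerSeries.coeff (R := k) d r
      = if d 0 = 0 ∧ d 2 = 0 then MvPowerSeries.coeff (R := k) (d + Finsupp.single 1 m) V else 0 :=
    fun d => rfl
  have hX0 : (MvPowerSeries.X 0 : MvPowerSeries (Fin 3) k)
      = MvPowerSeries.monomial (R := k) (Finsupp.single 0 1) 1 := by rw [← MvPowerSeries.X_pow_eq, pow_one]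
  have hX2 : (MvPowerSeries.X 2 : MvPowerSeries (Fin 3) k)
      = MvPowerSeries.monomial (R := k) (Finsupp.single 2 1) 1 := by rw [← MvPowerSeries.X_pow_eq, pow_one]
  have hX1 : (MvPowerSeries.X 1 : MvPowerSeries (Fin 3) k) ^ m
      = MvPowerSeries.monomial (R := k) (Finsupp.single 1 m) 1 := MvPowerSeries.X_pow_eq 1 m
  have key : V = MvPowerSeries.X 0 * p + MvPowerSeries.X 1 ^ m * r + MvPowerSeries.X 2 * q := by
    ext d
    rw [map_add, map_add, hX0, hX1, hX2, MvPowerSeries.coeff_monomial_mul,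
      MvPowerSeries.coeff_monomial_mul, MvPowerSeries.coeff_monomial_mul]
    have e10 : (Finsupp.single (1 : Fin 3) m) 0 = 0 := Finsupp.single_eq_of_ne' (by decide)
    have e12 : (Finsupp.single (1 : Fin 3) m) 2 = 0 := Finsupp.single_eq_of_ne' (by decide)
    have e20 : (Finsupp.single (2 : Fin 3) 1) 0 = 0 := Finsupp.single_eq_of_ne' (by decide)
    by_cases h0 : d 0 = 0
    · rw [if_neg (by rw [hsle]; omega)]
      by_cases h2 : d 2 = 0
      · have T2 : (if Finsupp.single (2 : Fin 3) 1 ≤ d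
            then 1 * MvPowerSeries.coeff (R := k) (d - Finsupp.single 2 1) q else 0) = 0 := by
          rw [if_neg (by rw [hsle]; omega)]
        by_cases h1 : d 1 < m
        · rw [T2, if_neg (by rw [hsle]; omega), h d h0 h2 h1]; ring
        · have hle : Finsupp.single 1 m ≤ d := by rw [hsle]; omega
          rw [T2, if_pos hle, one_mul, hcr,
            if_pos ⟨by rw [hsub]; omega, by rw [hsub]; omega⟩, tsub_add_cancel_of_le hle]
          ring
      · have Tm : (if Finsupp.single (1 : Fin 3) m ≤ d
            then 1 * MvPowerSeries.coeff (R := k) (d - Finsupp.single 1 m) r else 0) = 0 := by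
          split_ifs with hc
          · rw [hcr, if_neg (by rw [not_and]; intro _ hb; rw [hsub] at hb; omega), mul_zero]
          · rfl
        have hle : Finsupp.single 2 1 ≤ d := by rw [hsle]; omega
        rw [Tm, if_pos hle, one_mul, hcq, if_pos (by rw [hsub]; omega),
          tsub_add_cancel_of_le hle]
        ring
    · have Tm : (if Finsupp.single (1 : Fin 3) m ≤ d
          then 1 * MvPowerSeries.coeff (R := k) (d - Finsupp.single 1 m) r else 0) = 0 := by
        split_ifs with hc
        · rw [hcr, if_neg (by rw [not_and]; intro ha _; rw [hsub] at ha; omega), mul_zero]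
        · rfl
      have T2 : (if Finsupp.single (2 : Fin 3) 1 ≤ d
          then 1 * MvPowerSeries.coeff (R := k) (d - Finsupp.single 2 1) q else 0) = 0 := by
        split_ifs with hc
        · rw [hcq, if_neg (by rw [hsub]; omega), mul_zero]
        · rfl
      have hle : Finsupp.single 0 1 ≤ d := by rw [hsle]; omega
      rw [Tm, T2, if_pos hle, one_mul, hcp, tsub_add_cancel_of_le hle]
      ring
  rw [key]
  refine Ideal.add_mem _ (Ideal.add_mem _ ?_ ?_) ?_
  · exact Ideal.mul_mem_right p _ (Ideal.subset_span (by simp))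
  · exact Ideal.mul_mem_right r _ (Ideal.subset_span (by simp))
  · exact Ideal.mul_mem_right q _ (Ideal.subset_span (by simp))

/-- Cancellation of a power of `X 1` modulo `(X₀, X₁^(a+b), X₂)`. -/
lemma aux_shift (a b : ℕ) (V : MvPowerSeries (Fin 3) k)
    (h : MvPowerSeries.X 1 ^ a * V
      ∈ Ideal.span {MvPowerSeries.X 0, MvPowerSeries.X 1 ^ (a + b), MvPowerSeries.X 2}) :
    V ∈ Ideal.span {MvPowerSeries.X 0, MvPowerSeries.X 1 ^ b, MvPowerSeries.X 2} := by
  refine aux_mem_of_coeff b V fun d h0 h2 h1 => ?_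
  have hc := aux_coeff_vanish (a + b) _ h (Finsupp.single 1 a + d)
    (by rw [Finsupp.add_apply, Finsupp.single_eq_of_ne' (by decide)]; omega)
    (by rw [Finsupp.add_apply, Finsupp.single_eq_of_ne' (by decide)]; omega)
    (by rw [Finsupp.add_apply, Finsupp.single_eq_same]; omega)
  rwa [MvPowerSeries.X_pow_eq, MvPowerSeries.coeff_add_monomial_mul, one_mul] at hc

/-- Pushing membership in `(X₀, X₁^(2+c), X₂)` down to the quotient ring. -/
lemma aux_mk_mem (c : ℕ) (V : MvPowerSeries (Fin 3) k)
    (hV : V ∈ Ideal.span {MvPowerSeries.X 0, MvPowerSeries.X 1 ^ (2 + c), MvPowerSeries.X 2}) :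
    Ideal.Quotient.mk (Ideal.span {(MvPowerSeries.X 2 : MvPowerSeries (Fin 3) k) ^ 2
        + MvPowerSeries.X 0 ^ 3 + MvPowerSeries.X 1 ^ 5}) V
      ∈ Ideal.span {x18 k, (y18 k) ^ 2, z18 k} := by
  have h1 := Ideal.mem_map_of_mem (Ideal.Quotient.mk
    (Ideal.span {(MvPowerSeries.X 2 : MvPowerSeries (Fin 3) k) ^ 2
      + MvPowerSeries.X 0 ^ 3 + MvPowerSeries.X 1 ^ 5})) hV
  rw [Ideal.map_span] at h1
  refine Ideal.span_le.2 ?_ h1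
  rintro w ⟨s, hs, rfl⟩
  rcases hs with rfl | rfl | rfl
  · exact Ideal.subset_span (by left; rfl)
  · rw [map_pow, pow_add]
    exact Ideal.mul_mem_right _ _ (Ideal.subset_span (by right; left; rfl))
  · exact Ideal.subset_span (by right; right; rfl)

end Aux

set_option maxHeartbeats 2000000 in
set_option synthInstance.maxHeartbeats 400000 in
/-- Let `R = k⟦x,y,z⟧/(z² + x³ + y⁵)` for a field `k`, and let `φ₇` be the
`4 × 4` block matrix with zero diagonal blocks, upper-right block `!![-y³, -x²; x, -y²]` and
lower-left block `!![y², -x²; x, y³]`.  Then `φ₇² = -(x³ + y⁵) • id₄`, and the trace ideal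
of `coker(z·id₄ - φ₇)` over `R` equals `(x, y², z)`. -/
theorem traceIdeal_E8
    (k : Type*) [Field k] :
    (phi18 k * phi18 k
        = -(((x18 k) ^ 3 + (y18 k) ^ 5) • (1 : Matrix (Fin 4) (Fin 4) (E8 k)))) ∧
      traceIdeal (E8 k) ((Fin 4 → E8 k) ⧸ LinearMap.range (Matrix.mulVecLin
          (z18 k • (1 : Matrix (Fin 4) (Fin 4) (E8 k)) - phi18 k)))
        = Ideal.span {x18 k, (y18 k) ^ 2, z18 k} := by
  classical
  have hzero : (z18 k) ^ 2 + (x18 k) ^ 3 + (y18 k) ^ 5 = 0 := by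
    have h0 : (Ideal.Quotient.mk (Ideal.span
        {(MvPowerSeries.X 2 : MvPowerSeries (Fin 3) k) ^ 2
          + MvPowerSeries.X 0 ^ 3 + MvPowerSeries.X 1 ^ 5}))
        ((MvPowerSeries.X 2) ^ 2 + MvPowerSeries.X 0 ^ 3 + MvPowerSeries.X 1 ^ 5) = 0 :=
      Ideal.Quotient.eq_zero_iff_mem.2 (Ideal.subset_span rfl)
    simpa only [map_add, map_pow, x18, y18, z18] using h0
  have hsq : phi18 k * phi18 k
      = -(((x18 k) ^ 3 + (y18 k) ^ 5) • (1 : Matrix (Fin 4) (Fin 4) (E8 k))) := by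
    ext i j
    fin_cases i <;> fin_cases j <;>
      · simp only [phi18, Matrix.mul_apply, Fin.sum_univ_four, Fin.reduceFinMk, Matrix.of_apply, Fin.isValue, Matrix.cons_val', Matrix.cons_val_zero,
          Matrix.cons_val_one, Matrix.cons_val_two, Matrix.cons_val_three, Nat.succ_eq_add_one,
          Nat.reduceAdd, Matrix.tail_cons, Matrix.head_cons, Matrix.empty_val',
          Matrix.cons_val_fin_one, Matrix.head_fin_const, Matrix.neg_apply, Matrix.smul_apply,
          Matrix.one_apply, smul_eq_mul, Fin.reduceEq, if_true, if_false, reduceIte,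
          mul_one, mul_zero]
        ring
  refine ⟨hsq, ?_⟩
  set ψ : Matrix (Fin 4) (Fin 4) (E8 k) := z18 k • 1 - phi18 k with hψdef
  set ψ' : Matrix (Fin 4) (Fin 4) (E8 k) := z18 k • 1 + phi18 k with hψ'def
  set N : Submodule (E8 k) (Fin 4 → E8 k) := LinearMap.range (Matrix.mulVecLin ψ) with hNdef
  have hψ'ψ : ψ' * ψ = 0 := by
    ext i j
    fin_cases i <;> fin_cases j <;>
      · simp only [hψ'def, hψdef, Matrix.mul_apply, Fin.sum_univ_four, Matrix.add_apply,
          Matrix.sub_apply, Matrix.zero_apply, phi18, Fin.reduceFinMk, Matrix.of_apply, Fin.isValue, Matrix.cons_val', Matrix.cons_val_zero,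
          Matrix.cons_val_one, Matrix.cons_val_two, Matrix.cons_val_three, Nat.succ_eq_add_one,
          Nat.reduceAdd, Matrix.tail_cons, Matrix.head_cons, Matrix.empty_val',
          Matrix.cons_val_fin_one, Matrix.head_fin_const, Matrix.neg_apply, Matrix.smul_apply,
          Matrix.one_apply, smul_eq_mul, Fin.reduceEq, if_true, if_false, reduceIte,
          mul_one, mul_zero]
        first
        | linear_combination hzero
        | ring
  -- the ideal of the scalars
  set I : Ideal (E8 k) := Ideal.span {x18 k, (y18 k) ^ 2, z18 k} with hIdef
  -- the big ideal upstairs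
  set K : Ideal (MvPowerSeries (Fin 3) k) :=
    Ideal.span {MvPowerSeries.X 0, MvPowerSeries.X 1 ^ 5, MvPowerSeries.X 2} with hKdef
  have hX0K : (MvPowerSeries.X 0 : MvPowerSeries (Fin 3) k) ∈ K :=
    Ideal.subset_span (by left; rfl)
  have hX2K : (MvPowerSeries.X 2 : MvPowerSeries (Fin 3) k) ∈ K :=
    Ideal.subset_span (by right; right; rfl)
  have hX15K : (MvPowerSeries.X 1 : MvPowerSeries (Fin 3) k) ^ 5 ∈ K :=
    Ideal.subset_span (by right; left; rfl)
  have hFK : (MvPowerSeries.X 2 : MvPowerSeries (Fin 3) k) ^ 2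
      + MvPowerSeries.X 0 ^ 3 + MvPowerSeries.X 1 ^ 5 ∈ K :=
    Ideal.add_mem _ (Ideal.add_mem _ (Ideal.pow_mem_of_mem _ hX2K _ (by norm_num))
      (Ideal.pow_mem_of_mem _ hX0K _ (by norm_num))) hX15K
  have hdiffmem : ∀ W : MvPowerSeries (Fin 3) k,
      Ideal.Quotient.mk (Ideal.span {(MvPowerSeries.X 2 : MvPowerSeries (Fin 3) k) ^ 2
        + MvPowerSeries.X 0 ^ 3 + MvPowerSeries.X 1 ^ 5}) W = 0 → W ∈ K := by
    intro W hW
    have h1 := Ideal.Quotient.eq_zero_iff_mem.1 hW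
    refine Ideal.span_le.2 ?_ h1
    intro s hs
    rw [Set.mem_singleton_iff] at hs
    subst hs
    exact hFK
  apply le_antisymm
  · -- traceIdeal ≤ (x, y², z)
    refine iSup_le fun f => ?_
    rintro rr ⟨mm, rfl⟩
    obtain ⟨u, rfl⟩ := Submodule.Quotient.mk_surjective N mm
    set F : (Fin 4 → E8 k) →ₗ[E8 k] E8 k := f.comp (Submodule.mkQ N) with hFdef
    set v : Fin 4 → E8 k := fun j => F (Pi.single j 1) with hvdef
    have keyf : ∀ w : Fin 4 → E8 k, F w = ∑ j, w j * v j := by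
      intro w
      have hw : w = ∑ j, w j • (Pi.single j 1 : Fin 4 → E8 k) := by
        conv_lhs => rw [← Finset.univ_sum_single w]
        refine Finset.sum_congr rfl fun j _ => funext fun t => ?_
        simp [Pi.single_apply, mul_ite, mul_one, mul_zero]
      conv_lhs => rw [hw]
      rw [map_sum]
      refine Finset.sum_congr rfl fun j _ => ?_
      rw [map_smul, smul_eq_mul, hvdef]
    have hEq : ∀ i, ∑ j, ψ j i * v j = 0 := by
      intro i
      have h1 : F (ψ.mulVec (Pi.single i 1)) = 0 := by
        have hmk : Submodule.mkQ N (ψ.mulVec (Pi.single i 1)) = 0 :=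
          (Submodule.Quotient.mk_eq_zero N).2 ⟨Pi.single i 1, rfl⟩
        rw [hFdef, LinearMap.comp_apply, hmk, map_zero]
      have h2 := keyf (ψ.mulVec (Pi.single i 1))
      rw [h1, Matrix.mulVec_single] at h2
      simpa [mul_one] using h2.symm
    have E0 := hEq 0
    have E1 := hEq 1
    have E2 := hEq 2
    have E3 := hEq 3
    simp only [hψdef, Matrix.sub_apply, phi18, Fin.sum_univ_four, Fin.reduceFinMk, Matrix.of_apply, Fin.isValue, Matrix.cons_val', Matrix.cons_val_zero,
          Matrix.cons_val_one, Matrix.cons_val_two, Matrix.cons_val_three, Nat.succ_eq_add_one,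
          Nat.reduceAdd, Matrix.tail_cons, Matrix.head_cons, Matrix.empty_val',
          Matrix.cons_val_fin_one, Matrix.head_fin_const, Matrix.neg_apply, Matrix.smul_apply,
          Matrix.one_apply, smul_eq_mul, Fin.reduceEq, if_true, if_false, reduceIte,
          mul_one, mul_zero,
      sub_zero, zero_sub, zero_mul, add_zero, zero_add, neg_neg, neg_mul] at E0 E1 E2 E3
    obtain ⟨V0, hV0⟩ := Ideal.Quotient.mk_surjective (v 0)
    obtain ⟨V1, hV1⟩ := Ideal.Quotient.mk_surjective (v 1)
    obtain ⟨V2, hV2⟩ := Ideal.Quotient.mk_surjective (v 2)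
    obtain ⟨V3, hV3⟩ := Ideal.Quotient.mk_surjective (v 3)
    have hv0 : v 0 ∈ I := by
      have hq : Ideal.Quotient.mk (Ideal.span
          {(MvPowerSeries.X 2 : MvPowerSeries (Fin 3) k) ^ 2
            + MvPowerSeries.X 0 ^ 3 + MvPowerSeries.X 1 ^ 5}) (MvPowerSeries.X 1 ^ 3 * V0
          - MvPowerSeries.X 0 * V1 + MvPowerSeries.X 2 * V2) = 0 := by
        rw [map_add, map_sub, map_mul, map_mul, map_mul, map_pow, hV0, hV1, hV2]
        show (y18 k) ^ 3 * v 0 - x18 k * v 1 + z18 k * v 2 = 0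
        linear_combination E2
      have hmem := hdiffmem _ hq
      have hK3 : MvPowerSeries.X 1 ^ 3 * V0 ∈ K := by
        have hrw : MvPowerSeries.X 1 ^ 3 * V0 = (MvPowerSeries.X 1 ^ 3 * V0
            - MvPowerSeries.X 0 * V1 + MvPowerSeries.X 2 * V2)
            + MvPowerSeries.X 0 * V1 - MvPowerSeries.X 2 * V2 := by ring
        rw [hrw]
        exact Ideal.sub_mem _ (Ideal.add_mem _ hmem (Ideal.mul_mem_right _ _ hX0K))
          (Ideal.mul_mem_right _ _ hX2K)
      rw [← hV0]
      exact aux_mk_mem 0 V0 (aux_shift 3 2 V0 hK3)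
    have hv1 : v 1 ∈ I := by
      have hq : Ideal.Quotient.mk (Ideal.span
          {(MvPowerSeries.X 2 : MvPowerSeries (Fin 3) k) ^ 2
            + MvPowerSeries.X 0 ^ 3 + MvPowerSeries.X 1 ^ 5}) (MvPowerSeries.X 1 ^ 2 * V1
          + MvPowerSeries.X 0 ^ 2 * V0 + MvPowerSeries.X 2 * V3) = 0 := by
        rw [map_add, map_add, map_mul, map_mul, map_mul, map_pow, map_pow, hV0, hV1, hV3]
        show (y18 k) ^ 2 * v 1 + (x18 k) ^ 2 * v 0 + z18 k * v 3 = 0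
        linear_combination E3
      have hmem := hdiffmem _ hq
      have hK2 : MvPowerSeries.X 1 ^ 2 * V1 ∈ K := by
        have hrw : MvPowerSeries.X 1 ^ 2 * V1 = (MvPowerSeries.X 1 ^ 2 * V1
            + MvPowerSeries.X 0 ^ 2 * V0 + MvPowerSeries.X 2 * V3)
            - MvPowerSeries.X 0 ^ 2 * V0 - MvPowerSeries.X 2 * V3 := by ring
        rw [hrw]
        exact Ideal.sub_mem _ (Ideal.sub_mem _ hmem (Ideal.mul_mem_right _ _
          (Ideal.pow_mem_of_mem _ hX0K _ (by norm_num)))) (Ideal.mul_mem_right _ _ hX2K)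
      rw [← hV1]
      exact aux_mk_mem 1 V1 (aux_shift 2 3 V1 hK2)
    have hv2 : v 2 ∈ I := by
      have hq : Ideal.Quotient.mk (Ideal.span
          {(MvPowerSeries.X 2 : MvPowerSeries (Fin 3) k) ^ 2
            + MvPowerSeries.X 0 ^ 3 + MvPowerSeries.X 1 ^ 5}) (MvPowerSeries.X 1 ^ 2 * V2
          - MvPowerSeries.X 2 * V0 + MvPowerSeries.X 0 * V3) = 0 := by
        rw [map_add, map_sub, map_mul, map_mul, map_mul, map_pow, hV0, hV2, hV3]
        show (y18 k) ^ 2 * v 2 - z18 k * v 0 + x18 k * v 3 = 0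
        linear_combination -E0
      have hmem := hdiffmem _ hq
      have hK2 : MvPowerSeries.X 1 ^ 2 * V2 ∈ K := by
        have hrw : MvPowerSeries.X 1 ^ 2 * V2 = (MvPowerSeries.X 1 ^ 2 * V2
            - MvPowerSeries.X 2 * V0 + MvPowerSeries.X 0 * V3)
            + MvPowerSeries.X 2 * V0 - MvPowerSeries.X 0 * V3 := by ring
        rw [hrw]
        exact Ideal.sub_mem _ (Ideal.add_mem _ hmem (Ideal.mul_mem_right _ _ hX2K))
          (Ideal.mul_mem_right _ _ hX0K)
      rw [← hV2]
      exact aux_mk_mem 1 V2 (aux_shift 2 3 V2 hK2)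
    have hv3 : v 3 ∈ I := by
      have hq : Ideal.Quotient.mk (Ideal.span
          {(MvPowerSeries.X 2 : MvPowerSeries (Fin 3) k) ^ 2
            + MvPowerSeries.X 0 ^ 3 + MvPowerSeries.X 1 ^ 5}) (MvPowerSeries.X 1 ^ 3 * V3
          - MvPowerSeries.X 2 * V1 - MvPowerSeries.X 0 ^ 2 * V2) = 0 := by
        rw [map_sub, map_sub, map_mul, map_mul, map_mul, map_pow, map_pow, hV1, hV2, hV3]
        show (y18 k) ^ 3 * v 3 - z18 k * v 1 - (x18 k) ^ 2 * v 2 = 0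
        linear_combination -E1
      have hmem := hdiffmem _ hq
      have hK3 : MvPowerSeries.X 1 ^ 3 * V3 ∈ K := by
        have hrw : MvPowerSeries.X 1 ^ 3 * V3 = (MvPowerSeries.X 1 ^ 3 * V3
            - MvPowerSeries.X 2 * V1 - MvPowerSeries.X 0 ^ 2 * V2)
            + MvPowerSeries.X 2 * V1 + MvPowerSeries.X 0 ^ 2 * V2 := by ring
        rw [hrw]
        exact Ideal.add_mem _ (Ideal.add_mem _ hmem (Ideal.mul_mem_right _ _ hX2K))
          (Ideal.mul_mem_right _ _ (Ideal.pow_mem_of_mem _ hX0K _ (by norm_num)))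
      rw [← hV3]
      exact aux_mk_mem 0 V3 (aux_shift 3 2 V3 hK3)
    have hv : ∀ j, v j ∈ I := by
      intro j
      fin_cases j
      exacts [hv0, hv1, hv2, hv3]
    have : f (Submodule.Quotient.mk u) = F u := rfl
    rw [this, keyf u]
    exact Ideal.sum_mem _ fun j _ => Ideal.mul_mem_left _ _ (hv j)
  · -- (x, y², z) ≤ traceIdeal
    refine Ideal.span_le.2 ?_
    have mkrow : ∀ r : Fin 4, ψ' r 0 ∈
        traceIdeal (E8 k) ((Fin 4 → E8 k) ⧸ N) := by
      intro r
      set g : (Fin 4 → E8 k) →ₗ[E8 k] E8 k := (LinearMap.proj r).comp ψ'.mulVecLin with hgdef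
      have hker : N ≤ LinearMap.ker g := by
        rintro u ⟨w, rfl⟩
        show g (ψ.mulVecLin w) = 0
        simp [hgdef, Matrix.mulVecLin_apply, Matrix.mulVec_mulVec, hψ'ψ]
      have hval : ψ' r 0 = Submodule.liftQ N g hker (Submodule.Quotient.mk (Pi.single 0 1)) := by
        rw [Submodule.liftQ_apply]
        simp [hgdef, Matrix.mulVecLin_apply, Matrix.mulVec_single]
      rw [hval]
      exact Submodule.mem_iSup_of_mem (Submodule.liftQ N g hker) (LinearMap.mem_range_self _ _)
    intro t ht
    simp only [Set.mem_insert_iff, Set.mem_singleton_iff] at ht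
    rcases ht with rfl | rfl | rfl
    · have := mkrow 3
      simpa only [hψ'def, phi18, Matrix.add_apply, Fin.reduceFinMk, Matrix.of_apply, Fin.isValue, Matrix.cons_val', Matrix.cons_val_zero,
          Matrix.cons_val_one, Matrix.cons_val_two, Matrix.cons_val_three, Nat.succ_eq_add_one,
          Nat.reduceAdd, Matrix.tail_cons, Matrix.head_cons, Matrix.empty_val',
          Matrix.cons_val_fin_one, Matrix.head_fin_const, Matrix.neg_apply, Matrix.smul_apply,
          Matrix.one_apply, smul_eq_mul, Fin.reduceEq, if_true, if_false, reduceIte,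
          mul_one, mul_zero,
        zero_add, add_zero, SetLike.mem_coe] using this
    · have := mkrow 2
      simpa only [hψ'def, phi18, Matrix.add_apply, Fin.reduceFinMk, Matrix.of_apply, Fin.isValue, Matrix.cons_val', Matrix.cons_val_zero,
          Matrix.cons_val_one, Matrix.cons_val_two, Matrix.cons_val_three, Nat.succ_eq_add_one,
          Nat.reduceAdd, Matrix.tail_cons, Matrix.head_cons, Matrix.empty_val',
          Matrix.cons_val_fin_one, Matrix.head_fin_const, Matrix.neg_apply, Matrix.smul_apply,
          Matrix.one_apply, smul_eq_mul, Fin.reduceEq, if_true, if_false, reduceIte,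
          mul_one, mul_zero,
        zero_add, add_zero, SetLike.mem_coe] using this
    · have := mkrow 0
      simpa only [hψ'def, phi18, Matrix.add_apply, Fin.reduceFinMk, Matrix.of_apply, Fin.isValue, Matrix.cons_val', Matrix.cons_val_zero,
          Matrix.cons_val_one, Matrix.cons_val_two, Matrix.cons_val_three, Nat.succ_eq_add_one,
          Nat.reduceAdd, Matrix.tail_cons, Matrix.head_cons, Matrix.empty_val',
          Matrix.cons_val_fin_one, Matrix.head_fin_const, Matrix.neg_apply, Matrix.smul_apply,
          Matrix.one_apply, smul_eq_mul, Fin.reduceEq, if_true, if_false, reduceIte,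
          mul_one, mul_zero,
        zero_add, add_zero, SetLike.mem_coe] using this
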